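/- arXiv:1507.01327 — 6 statements merged into one kernel-verified Lean document; each statement's English description precedes it below -/
import Mathlib

section
/- There exists a game ladder (N, T, f) for which the global influence relation ⪰ is not complete; concretely, for N = {1,2,3,4,5,6,7}, T = {1,2,3}, and f defined by f(x) = 1 if x ≤ y componentwise for some y ∈ {(3,1,2,1,1,2,2), (1,3,2,1,1,2,2), (1,2,3,1,1,2,2)} and f(x) = 0 otherwise, players 1 and 3 are not comparable under ⪰ (neither 1 ⪰ 3 nor 3 ⪰ 1 holds). -/
open Function

/-- A position profile: every player's position lies in `{1, ..., j}`. -/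
def IsProfile (n j : ℕ) (x : Fin n → ℕ) : Prop :=
  ∀ i : Fin n, 1 ≤ x i ∧ x i ≤ j

/-- Monotonicity of the production function on position profiles. -/
def LadderMono (n j : ℕ) (f : (Fin n → ℕ) → ℝ) : Prop :=
  ∀ x y : Fin n → ℕ, IsProfile n j x → IsProfile n j y →
    (∀ i : Fin n, x i ≤ y i) → f x ≤ f y

/-- `GlobalGE n j f p q` is the global influence relation `p ⪰ q`: for all positions
`1 ≤ s < r ≤ j` and every profile `x` with `x p = x q = s`, promoting `p` to `r`
(i.e. `x + (r-s)eᵖ`, which equals `Function.update x p r`) produces at least as much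
output as promoting `q` to `r`. -/
def GlobalGE (n j : ℕ) (f : (Fin n → ℕ) → ℝ) (p q : Fin n) : Prop :=
  ∀ s r : ℕ, 1 ≤ s → s < r → r ≤ j →
    ∀ x : Fin n → ℕ, IsProfile n j x → x p = s → x q = s →
      f (Function.update x q r) ≤ f (Function.update x p r)

/-- The production function of the counterexample: `f x = 1` if `x` is componentwise
below one of `(3,1,2,1,1,2,2)`, `(1,3,2,1,1,2,2)`, `(1,2,3,1,1,2,2)`, else `f x = 0`. -/
noncomputable def fEx : (Fin 7 → ℕ) → ℝ := fun x =>
  if (∀ i, x i ≤ ![3, 1, 2, 1, 1, 2, 2] i) ∨ (∀ i, x i ≤ ![1, 3, 2, 1, 1, 2, 2] i) ∨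
      (∀ i, x i ≤ ![1, 2, 3, 1, 1, 2, 2] i) then 1 else 0

/-- For the concrete game ladder with `N = {1,…,7}`, `T = {1,2,3}` and
production function `fEx`, players `1` and `3` (indices `0` and `2`) are not
comparable under `⪰`, so `⪰` is not complete. -/
theorem globalGE_not_complete :
    ¬ GlobalGE 7 3 fEx 0 2 ∧ ¬ GlobalGE 7 3 fEx 2 0 := by
  constructor
  · intro h
    have := h 1 3 le_rfl (by norm_num) le_rfl ![1, 2, 1, 1, 1, 2, 2]
      (by intro i; fin_cases i <;> simp <;> decide) rfl rfl
    have h1 : Function.update ![1, 2, 1, 1, 1, 2, 2] (2 : Fin 7) 3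
        = ![1, 2, 3, 1, 1, 2, 2] := by
      ext i; fin_cases i <;> simp [Function.update] <;> decide
    have h2 : Function.update ![1, 2, 1, 1, 1, 2, 2] (0 : Fin 7) 3
        = ![3, 2, 1, 1, 1, 2, 2] := by
      ext i; fin_cases i <;> simp [Function.update] <;> decide
    rw [h1, h2, fEx, fEx] at this
    rw [if_pos (by right; right; decide), if_neg (by decide)] at this
    norm_num at this
  · intro h
    have := h 2 3 (by norm_num) (by norm_num) le_rfl ![2, 1, 2, 1, 1, 2, 2]
      (by intro i; fin_cases i <;> simp <;> decide) rfl rfl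
    have h1 : Function.update ![2, 1, 2, 1, 1, 2, 2] (0 : Fin 7) 3
        = ![3, 1, 2, 1, 1, 2, 2] := by
      ext i; fin_cases i <;> simp [Function.update] <;> decide
    have h2 : Function.update ![2, 1, 2, 1, 1, 2, 2] (2 : Fin 7) 3
        = ![2, 1, 3, 1, 1, 2, 2] := by
      ext i; fin_cases i <;> simp [Function.update] <;> decide
    rw [h1, h2, fEx, fEx] at this
    rw [if_pos (by left; decide), if_neg (by decide)] at this
    norm_num at this
end

section
/- Let (N, T, f) be a linear game ladder (i.e., the global influence relation ⪰ is complete). Then ⪰ is transitive: for all players i, j, k, if i ⪰ j and j ⪰ k, then i ⪰ k. -/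
open Function

/-- In a linear game ladder (i.e. `⪰` is complete), the global influence
relation `⪰` is transitive. -/
theorem globalGE_transitive_of_complete (n j : ℕ) (hn : 1 ≤ n) (hj : 2 ≤ j)
    (f : (Fin n → ℕ) → ℝ) (hmono : LadderMono n j f)
    (hcomp : ∀ p q : Fin n, GlobalGE n j f p q ∨ GlobalGE n j f q p) :
    ∀ a b c : Fin n, GlobalGE n j f a b → GlobalGE n j f b c → GlobalGE n j f a c := by
  intro a b c hab hbc
  -- degenerate cases
  by_cases hac : a = c
  · subst hac; intro s r hs hsr hrj x hx hxa hxc; exact le_refl _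
  by_cases hab' : a = b
  · subst hab'; exact hbc
  by_cases hbc' : b = c
  · subst hbc'; exact hab
  -- now a, b, c pairwise distinct
  have hba : b ≠ a := fun h => hab' h.symm
  have hca : c ≠ a := fun h => hac h.symm
  have hcb : c ≠ b := fun h => hbc' h.symm
  rcases hcomp a c with hdone | hca'
  · exact hdone
  -- hca' : GlobalGE n j f c a
  intro s r hs hsr hrj x hx hxa hxc
  set t := x b with ht
  have ht1 : 1 ≤ t := (hx b).1
  have htj : t ≤ j := (hx b).2
  have hs' : s ≤ j := le_of_lt (lt_of_lt_of_le hsr hrj)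
  set y : ℕ → ℕ → ℕ → Fin n → ℕ :=
    fun u v w i => if i = a then u else if i = b then v else if i = c then w else x i with hy
  have hya : ∀ u v w, y u v w a = u := by intro u v w; simp [hy]
  have hyb : ∀ u v w, y u v w b = v := by intro u v w; simp [hy, hba]
  have hyc : ∀ u v w, y u v w c = w := by intro u v w; simp [hy, hca, hcb]
  have hprof : ∀ u v w, 1 ≤ u → u ≤ j → 1 ≤ v → v ≤ j → 1 ≤ w → w ≤ j →
      IsProfile n j (y u v w) := by
    intro u v w hu1 hu2 hv1 hv2 hw1 hw2 i
    by_cases h1 : i = a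
    · subst h1; rw [hya]; exact ⟨hu1, hu2⟩
    by_cases h2 : i = b
    · subst h2; rw [hyb]; exact ⟨hv1, hv2⟩
    by_cases h3 : i = c
    · subst h3; rw [hyc]; exact ⟨hw1, hw2⟩
    · simp only [hy, h1, h2, h3, if_false]; exact hx i
  have hupd_a : ∀ u v w u', Function.update (y u v w) a u' = y u' v w := by
    intro u v w u'; funext i
    by_cases h : i = a
    · subst h; simp [hya]
    · simp only [Function.update, hy]
      simp [h]
  have hupd_b : ∀ u v w v', Function.update (y u v w) b v' = y u v' w := by
    intro u v w v'; funext i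
    by_cases h : i = b
    · subst h; simp [hyb, hba]
    · simp only [Function.update, hy]
      simp [h]
  have hupd_c : ∀ u v w w', Function.update (y u v w) c w' = y u v w' := by
    intro u v w w'; funext i
    by_cases h : i = c
    · subst h; simp [hyc, hca, hcb]
    · simp only [Function.update, hy]
      simp [h]
  -- swap lemmas
  have sab : ∀ u v w, 1 ≤ u → u < v → v ≤ j → 1 ≤ w → w ≤ j →
      f (y u v w) ≤ f (y v u w) := by
    intro u v w hu huv hv hw1 hw2
    have h := hab u v hu huv hv (y u u w)
      (hprof u u w hu (le_of_lt (lt_of_lt_of_le huv hv)) hu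
        (le_of_lt (lt_of_lt_of_le huv hv)) hw1 hw2) (hya u u w) (hyb u u w)
    rwa [hupd_b, hupd_a] at h
  have sbc : ∀ u v w, 1 ≤ u → u < v → v ≤ j → 1 ≤ w → w ≤ j →
      f (y w u v) ≤ f (y w v u) := by
    intro u v w hu huv hv hw1 hw2
    have h := hbc u v hu huv hv (y w u u)
      (hprof w u u hw1 hw2 hu (le_of_lt (lt_of_lt_of_le huv hv)) hu
        (le_of_lt (lt_of_lt_of_le huv hv))) (hyb w u u) (hyc w u u)
    rwa [hupd_c, hupd_b] at h
  have sca : ∀ u v w, 1 ≤ u → u < v → v ≤ j → 1 ≤ w → w ≤ j →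
      f (y v w u) ≤ f (y u w v) := by
    intro u v w hu huv hv hw1 hw2
    have h := hca' u v hu huv hv (y u w u)
      (hprof u w u hu (le_of_lt (lt_of_lt_of_le huv hv)) hw1 hw2 hu
        (le_of_lt (lt_of_lt_of_le huv hv))) (hyc u w u) (hya u w u)
    rwa [hupd_a, hupd_c] at h
  -- rewrite goal in terms of y
  have e1 : Function.update x c r = y s t r := by
    funext i
    by_cases h1 : i = c
    · subst h1; simp [hyc]
    by_cases h2 : i = a
    · subst h2; rw [Function.update_of_ne (by exact fun h => hca h.symm), hya, hxa]
    by_cases h3 : i = b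
    · subst h3; rw [Function.update_of_ne hcb.symm, hyb, ht]
    · rw [Function.update_of_ne h1]
      simp only [hy, h2, h3, h1, if_false]
  have e2 : Function.update x a r = y r t s := by
    funext i
    by_cases h2 : i = a
    · subst h2; simp [hya]
    by_cases h3 : i = b
    · subst h3; rw [Function.update_of_ne hba, hyb, ht]
    by_cases h1 : i = c
    · subst h1; rw [Function.update_of_ne hca, hyc, hxc]
    · rw [Function.update_of_ne h2]
      simp only [hy, h2, h3, h1, if_false]
  rw [e1, e2]
  -- case analysis on t vs s, r
  rcases lt_trichotomy t s with hts | hts | hts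
  · -- t < s < r : (s,t,r) → (s,r,t) → (r,s,t) → (t,s,r) → (t,r,s) → (r,t,s)
    calc f (y s t r) ≤ f (y s r t) := sbc t r s ht1 (lt_trans hts hsr) hrj hs hs'
      _ ≤ f (y r s t) := sab s r t hs hsr hrj ht1 htj
      _ ≤ f (y t s r) := sca t r s ht1 (lt_trans hts hsr) hrj hs hs'
      _ ≤ f (y t r s) := sbc s r t hs hsr hrj ht1 htj
      _ ≤ f (y r t s) := sab t r s ht1 (lt_trans hts hsr) hrj hs hs'
  · -- t = s
    subst hts
    calc f (y t t r) ≤ f (y t r t) := sbc t r t ht1 hsr hrj ht1 htj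
      _ ≤ f (y r t t) := sab t r t ht1 hsr hrj ht1 htj
  · -- s < t
    rcases lt_trichotomy t r with htr | htr | htr
    · -- s < t < r : (s,t,r) → (s,r,t) → (r,s,t) → (r,t,s)
      calc f (y s t r) ≤ f (y s r t) := sbc t r s ht1 htr hrj hs hs'
        _ ≤ f (y r s t) := sab s r t hs hsr hrj ht1 htj
        _ ≤ f (y r t s) := sbc s t r hs hts htj (le_trans hs (le_of_lt hsr)) hrj
    · -- t = r
      subst htr
      calc f (y s t t) ≤ f (y t s t) := sab s t t hs hsr htj ht1 htj
        _ ≤ f (y t t s) := sbc s t t hs hsr htj ht1 htj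
    · -- r < t : (s,t,r) → (t,s,r) → (r,s,t) → (r,t,s), using c ⪰ a
      calc f (y s t r) ≤ f (y t s r) := sab s t r hs hts htj (le_trans hs (le_of_lt hsr)) hrj
        _ ≤ f (y r s t) := sca r t s (le_trans hs (le_of_lt hsr)) htr htj hs hs'
        _ ≤ f (y r t s) := sbc s t r hs hts htj (le_trans hs (le_of_lt hsr)) hrj
end

section
/- Let (N, T, f) be a linear game ladder (i.e., the global influence relation ⪰ is complete). For all players i, j, k, if i ≻ j and j ~ k, then i ≻ k. -/
open Function

lemma profile_update {n j : ℕ} {x : Fin n → ℕ} (hx : IsProfile n j x)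
    (i : Fin n) {v : ℕ} (h1 : 1 ≤ v) (h2 : v ≤ j) :
    IsProfile n j (Function.update x i v) := by
  intro k
  rcases eq_or_ne k i with rfl | h
  · simp [h1, h2]
  · simp [Function.update_apply, h, hx k]

lemma key (n j : ℕ) (f : (Fin n → ℕ) → ℝ) (p m q : Fin n)
    (hpm : GlobalGE n j f p m) (hmq : GlobalGE n j f m q)
    (hqm : GlobalGE n j f q m) (hqp : GlobalGE n j f q p) :
    GlobalGE n j f p q := by
  by_cases hPQ : p = q
  · subst hPQ; intro s r _ _ _ x _ _ _; exact le_refl _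
  by_cases hPM : p = m
  · subst hPM; exact hmq
  by_cases hMQ : m = q
  · subst hMQ; exact hpm
  intro s r hs hsr hrj x hx hxp hxq
  have h1t : 1 ≤ x m := (hx m).1
  have htj : x m ≤ j := (hx m).2
  have hsj : s ≤ j := le_trans hsr.le hrj
  have h1r : 1 ≤ r := hs.trans hsr.le
  set t := x m with htdef
  rcases lt_trichotomy t s with hts | hts | hts
  · -- t < s
    have htr : t < r := hts.trans hsr
    -- step 1: m ⪰ q at (r, t) on z1 = update x q t
    have step1 : f (Function.update x q r) ≤
        f (Function.update (Function.update x q t) m r) := by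
      have := hmq t r h1t htr hrj (Function.update x q t)
        (profile_update hx q h1t (le_trans hts.le hsj)) (by simp [Function.update_apply, hPM, hPQ, hMQ, Ne.symm hPM, Ne.symm hPQ, Ne.symm hMQ, hxp, hxq, htdef]) (by simp [Function.update_apply, hPM, hPQ, hMQ, Ne.symm hPM, Ne.symm hPQ, Ne.symm hMQ, hxp, hxq, htdef])
      have e : Function.update (Function.update x q t) q r = Function.update x q r := by
        simp [Function.update_idem]
      rwa [e] at this
    -- step 2: p ⪰ m at (r, s) on z2 = update (update x q t) m s
    have step2 : f (Function.update (Function.update x q t) m r) ≤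
        f (Function.update (Function.update (Function.update x q t) m s) p r) := by
      have := hpm s r hs hsr hrj (Function.update (Function.update x q t) m s)
        (profile_update (profile_update hx q h1t (le_trans hts.le hsj)) m hs hsj)
        (by simp [Function.update_apply, hPM, hPQ, hMQ, Ne.symm hPM, Ne.symm hPQ, Ne.symm hMQ, hxp, hxq, htdef]) (by simp [Function.update_apply, hPM, hPQ, hMQ, Ne.symm hPM, Ne.symm hPQ, Ne.symm hMQ, hxp, hxq, htdef])
      have e : Function.update (Function.update (Function.update x q t) m s) m r
          = Function.update (Function.update x q t) m r := by
        simp [Function.update_idem]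
      rwa [e] at this
    -- step 3: q ⪰ m at (s, t) on z3 = update (update x p r) q t
    have step3 : f (Function.update (Function.update (Function.update x q t) m s) p r) ≤
        f (Function.update x p r) := by
      have := hqm t s h1t hts hsj (Function.update (Function.update x p r) q t)
        (profile_update (profile_update hx p h1r hrj) q h1t (le_trans hts.le hsj))
        (by simp [Function.update_apply, hPM, hPQ, hMQ, Ne.symm hPM, Ne.symm hPQ, Ne.symm hMQ, hxp, hxq, htdef]) (by simp [Function.update_apply, hPM, hPQ, hMQ, Ne.symm hPM, Ne.symm hPQ, Ne.symm hMQ, hxp, hxq, htdef])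
      have e1 : Function.update (Function.update (Function.update x p r) q t) m s
          = Function.update (Function.update (Function.update x q t) m s) p r := by
        funext i; simp only [Function.update_apply]; split_ifs <;> simp_all
      have e2 : Function.update (Function.update (Function.update x p r) q t) q s
          = Function.update x p r := by
        funext i; simp only [Function.update_apply]; split_ifs <;> simp_all
      rwa [e1, e2] at this
    exact le_trans step1 (le_trans step2 step3)
  · -- t = s
    have h1 := hmq s r hs hsr hrj x hx hts hxq
    have h2 := hpm s r hs hsr hrj x hx hxp hts
    exact le_trans h1 h2
  · -- s < t
    rcases lt_trichotomy t r with htr | htr | htr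
    · -- s < t < r
      -- step 1: p ⪰ m at (t, s) on z1 = update (update x q r) m s
      have step1 : f (Function.update x q r) ≤
          f (Function.update (Function.update (Function.update x q r) m s) p t) := by
        have := hpm s t hs hts htj (Function.update (Function.update x q r) m s)
          (profile_update (profile_update hx q h1r hrj) m hs hsj)
          (by simp [Function.update_apply, hPM, hPQ, hMQ, Ne.symm hPM, Ne.symm hPQ, Ne.symm hMQ, hxp, hxq, htdef]) (by simp [Function.update_apply, hPM, hPQ, hMQ, Ne.symm hPM, Ne.symm hPQ, Ne.symm hMQ, hxp, hxq, htdef])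
        have e : Function.update (Function.update (Function.update x q r) m s) m t
            = Function.update x q r := by
          funext i; simp only [Function.update_apply]; split_ifs <;> simp_all
        rwa [e] at this
      -- step 2: m ⪰ q at (r, s) on z2 = update (update x p t) m s
      have step2 : f (Function.update (Function.update (Function.update x q r) m s) p t) ≤
          f (Function.update (Function.update (Function.update x p t) m s) m r) := by
        have := hmq s r hs hsr hrj (Function.update (Function.update x p t) m s)
          (profile_update (profile_update hx p h1t htj) m hs hsj)
          (by simp [Function.update_apply, hPM, hPQ, hMQ, Ne.symm hPM, Ne.symm hPQ, Ne.symm hMQ, hxp, hxq, htdef]) (by simp [Function.update_apply, hPM, hPQ, hMQ, Ne.symm hPM, Ne.symm hPQ, Ne.symm hMQ, hxp, hxq, htdef])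
        have e : Function.update (Function.update (Function.update x p t) m s) q r
            = Function.update (Function.update (Function.update x q r) m s) p t := by
          funext i; simp only [Function.update_apply]; split_ifs <;> simp_all
        rwa [e] at this
      -- step 3: p ⪰ m at (r, t) on z3 = update x p t
      have step3 : f (Function.update (Function.update (Function.update x p t) m s) m r) ≤
          f (Function.update x p r) := by
        have := hpm t r h1t htr hrj (Function.update x p t)
          (profile_update hx p h1t htj) (by simp [Function.update_apply, hPM, hPQ, hMQ, Ne.symm hPM, Ne.symm hPQ, Ne.symm hMQ, hxp, hxq, htdef]) (by simp [Function.update_apply, hPM, hPQ, hMQ, Ne.symm hPM, Ne.symm hPQ, Ne.symm hMQ, hxp, hxq, htdef])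
        have e1 : Function.update (Function.update x p t) m r
            = Function.update (Function.update (Function.update x p t) m s) m r := by
          simp [Function.update_idem]
        have e2 : Function.update (Function.update x p t) p r = Function.update x p r := by
          simp [Function.update_idem]
        rwa [e2, e1] at this
      exact le_trans step1 (le_trans step2 step3)
    · -- t = r
      -- step 1: p ⪰ m at (r, s) on z1 = update (update x q r) m s
      have step1 : f (Function.update x q r) ≤
          f (Function.update (Function.update (Function.update x q r) m s) p r) := by
        have := hpm s r hs hsr hrj (Function.update (Function.update x q r) m s)
          (profile_update (profile_update hx q h1r hrj) m hs hsj)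
          (by simp [Function.update_apply, hPM, hPQ, hMQ, Ne.symm hPM, Ne.symm hPQ, Ne.symm hMQ, hxp, hxq, htdef]) (by simp [Function.update_apply, hPM, hPQ, hMQ, Ne.symm hPM, Ne.symm hPQ, Ne.symm hMQ, hxp, hxq, htdef])
        have e : Function.update (Function.update (Function.update x q r) m s) m r
            = Function.update x q r := by
          funext i; simp only [Function.update_apply]; split_ifs <;> simp_all
        rwa [e] at this
      -- step 2: m ⪰ q at (r, s) on z2 = update (update x p r) m s
      have step2 : f (Function.update (Function.update (Function.update x q r) m s) p r) ≤
          f (Function.update x p r) := by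
        have := hmq s r hs hsr hrj (Function.update (Function.update x p r) m s)
          (profile_update (profile_update hx p h1r hrj) m hs hsj)
          (by simp [Function.update_apply, hPM, hPQ, hMQ, Ne.symm hPM, Ne.symm hPQ, Ne.symm hMQ, hxp, hxq, htdef]) (by simp [Function.update_apply, hPM, hPQ, hMQ, Ne.symm hPM, Ne.symm hPQ, Ne.symm hMQ, hxp, hxq, htdef])
        have e1 : Function.update (Function.update (Function.update x p r) m s) q r
            = Function.update (Function.update (Function.update x q r) m s) p r := by
          funext i; simp only [Function.update_apply]; split_ifs <;> simp_all
        have e2 : Function.update (Function.update (Function.update x p r) m s) m r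
            = Function.update x p r := by
          funext i; simp only [Function.update_apply]; split_ifs <;> simp_all
        rwa [e1, e2] at this
      exact le_trans step1 step2
    · -- r < t
      -- step 1: p ⪰ m at (t, s) on z1 = update (update x q r) m s
      have step1 : f (Function.update x q r) ≤
          f (Function.update (Function.update (Function.update x q r) m s) p t) := by
        have := hpm s t hs hts htj (Function.update (Function.update x q r) m s)
          (profile_update (profile_update hx q h1r hrj) m hs hsj)
          (by simp [Function.update_apply, hPM, hPQ, hMQ, Ne.symm hPM, Ne.symm hPQ, Ne.symm hMQ, hxp, hxq, htdef]) (by simp [Function.update_apply, hPM, hPQ, hMQ, Ne.symm hPM, Ne.symm hPQ, Ne.symm hMQ, hxp, hxq, htdef])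
        have e : Function.update (Function.update (Function.update x q r) m s) m t
            = Function.update x q r := by
          funext i; simp only [Function.update_apply]; split_ifs <;> simp_all
        rwa [e] at this
      -- step 2: q ⪰ p at (t, r) on z2 = update (update (update x p r) m s) q r
      have step2 : f (Function.update (Function.update (Function.update x q r) m s) p t) ≤
          f (Function.update (Function.update (Function.update x p r) m s) q t) := by
        have := hqp r t h1r htr htj
          (Function.update (Function.update (Function.update x p r) m s) q r)
          (profile_update (profile_update (profile_update hx p h1r hrj) m hs hsj) q h1r hrj)
          (by simp [Function.update_apply, hPM, hPQ, hMQ, Ne.symm hPM, Ne.symm hPQ, Ne.symm hMQ, hxp, hxq, htdef]) (by simp [Function.update_apply, hPM, hPQ, hMQ, Ne.symm hPM, Ne.symm hPQ, Ne.symm hMQ, hxp, hxq, htdef])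
        have e1 : Function.update
            (Function.update (Function.update (Function.update x p r) m s) q r) p t
            = Function.update (Function.update (Function.update x q r) m s) p t := by
          funext i; simp only [Function.update_apply]; split_ifs <;> simp_all
        have e2 : Function.update
            (Function.update (Function.update (Function.update x p r) m s) q r) q t
            = Function.update (Function.update (Function.update x p r) m s) q t := by
          simp [Function.update_idem]
        rwa [e1, e2] at this
      -- step 3: m ⪰ q at (t, s) on z3 = update (update x p r) m s
      have step3 : f (Function.update (Function.update (Function.update x p r) m s) q t) ≤
          f (Function.update x p r) := by
        have := hmq s t hs hts htj (Function.update (Function.update x p r) m s)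
          (profile_update (profile_update hx p h1r hrj) m hs hsj)
          (by simp [Function.update_apply, hPM, hPQ, hMQ, Ne.symm hPM, Ne.symm hPQ, Ne.symm hMQ, hxp, hxq, htdef]) (by simp [Function.update_apply, hPM, hPQ, hMQ, Ne.symm hPM, Ne.symm hPQ, Ne.symm hMQ, hxp, hxq, htdef])
        have e : Function.update (Function.update (Function.update x p r) m s) m t
            = Function.update x p r := by
          funext i; simp only [Function.update_apply]; split_ifs <;> simp_all
        rwa [e] at this
      exact le_trans step1 (le_trans step2 step3)

/-- In a linear game ladder, if `i ≻ j` and `j ~ k`, then `i ≻ k`. -/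
theorem succ_of_succ_sim (n j : ℕ) (hn : 1 ≤ n) (hj : 2 ≤ j)
    (f : (Fin n → ℕ) → ℝ) (hmono : LadderMono n j f)
    (hcomp : ∀ p q : Fin n, GlobalGE n j f p q ∨ GlobalGE n j f q p) :
    ∀ a b c : Fin n,
      (GlobalGE n j f a b ∧ ¬ GlobalGE n j f b a) →
      (GlobalGE n j f b c ∧ GlobalGE n j f c b) →
      (GlobalGE n j f a c ∧ ¬ GlobalGE n j f c a) := by
  intro a b c ⟨hab, hnba⟩ ⟨hbc, hcb⟩
  have hac : GlobalGE n j f a c := by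
    rcases hcomp a c with h | hca
    · exact h
    · exact key n j f a b c hab hbc hcb hca
  refine ⟨hac, fun hca => hnba ?_⟩
  exact key n j f b c a hbc hca hac hab
end

section
/- Let (N, T, f) be a linear game ladder (i.e., the global influence relation ⪰ is complete). For all players i, j, k, if i ~ j and j ≻ k, then i ≻ k. -/
open Function

/-- Swap the values of coordinates `a` and `b`. -/
def swapAB {n : ℕ} (a b : Fin n) (x : Fin n → ℕ) : Fin n → ℕ :=
  fun i => if i = a then x b else if i = b then x a else x i

lemma swapAB_profile {n j : ℕ} (a b : Fin n) (x : Fin n → ℕ) (hx : IsProfile n j x) :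
    IsProfile n j (swapAB a b x) := by
  intro i
  unfold swapAB
  split_ifs <;> first | exact hx b | exact hx a | exact hx i

/-- If `a ~ b`, then `f` is invariant under swapping the `a` and `b` coordinates. -/
lemma swap_invariant (n j : ℕ) (f : (Fin n → ℕ) → ℝ) (a b : Fin n)
    (hab : GlobalGE n j f a b) (hba : GlobalGE n j f b a)
    (x : Fin n → ℕ) (hx : IsProfile n j x) :
    f (swapAB a b x) = f x := by
  have key : ∀ (p q : Fin n) (y : Fin n → ℕ), IsProfile n j y → y p < y q →
      GlobalGE n j f p q → GlobalGE n j f q p →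
      f (swapAB p q y) = f y := by
    intro p q y hy hlt h1 h2
    have hpq : p ≠ q := by
      intro h; rw [h] at hlt; exact lt_irrefl _ hlt
    set z : Fin n → ℕ := Function.update y q (y p) with hz
    have hzy : IsProfile n j z := by
      intro i
      by_cases hi : i = q
      · subst hi; rw [hz, Function.update_self]; exact hy p
      · rw [hz, Function.update_of_ne hi]; exact hy i
    have hzp : z p = y p := Function.update_of_ne hpq _ _
    have hzq : z q = y p := Function.update_self _ _ _
    have h1' := h1 (y p) (y q) (hy p).1 hlt (hy q).2 z hzy hzp hzq
    have h2' := h2 (y p) (y q) (hy p).1 hlt (hy q).2 z hzy hzq hzp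
    have e1 : Function.update z q (y q) = y := by
      funext i
      by_cases hi : i = q
      · subst hi; rw [Function.update_self]
      · rw [Function.update_of_ne hi, hz, Function.update_of_ne hi]
    have e2 : Function.update z p (y q) = swapAB p q y := by
      funext i
      unfold swapAB
      by_cases hi : i = p
      · subst hi; rw [Function.update_self, if_pos rfl]
      · rw [Function.update_of_ne hi, hz]
        by_cases hi' : i = q
        · subst hi'; rw [Function.update_self, if_neg hi, if_pos rfl]
        · rw [Function.update_of_ne hi', if_neg hi, if_neg hi']
    rw [e1, e2] at h1' h2'
    exact le_antisymm h2' h1'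
  rcases lt_trichotomy (x a) (x b) with h | h | h
  · exact key a b x hx h hab hba
  · congr 1
    funext i
    unfold swapAB
    split_ifs with h1 h2
    · subst h1; exact h.symm
    · subst h2; exact h
    · rfl
  · have : swapAB a b x = swapAB b a x := by
      funext i
      unfold swapAB
      by_cases h1 : i = a <;> by_cases h2 : i = b
      · rw [if_pos h1, if_pos h2, h1.symm.trans h2]
      · rw [if_pos h1, if_neg h2, if_pos h1]
      · rw [if_neg h1, if_pos h2, if_pos h2]
      · rw [if_neg h1, if_neg h2, if_neg h2, if_neg h1]
    rw [this]
    exact key b a x hx h hba hab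

/-- If `a ~ b` and `c ⪰ a` with `c ∉ {a, b}`, then `c ⪰ b`. -/
lemma transfer (n j : ℕ) (f : (Fin n → ℕ) → ℝ) (a b c : Fin n)
    (hab : GlobalGE n j f a b) (hba : GlobalGE n j f b a)
    (hca : GlobalGE n j f c a) (hc1 : c ≠ a) (hc2 : c ≠ b) :
    GlobalGE n j f c b := by
  intro s r hs hsr hrj x hx hxc hxb
  set y : Fin n → ℕ := swapAB a b x with hy
  have hyprof : IsProfile n j y := swapAB_profile a b x hx
  have hyc : y c = s := by rw [hy]; unfold swapAB; rw [if_neg hc1, if_neg hc2]; exact hxc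
  have hya : y a = s := by rw [hy]; unfold swapAB; rw [if_pos rfl]; exact hxb
  have h := hca s r hs hsr hrj y hyprof hyc hya
  have e1 : Function.update y a r = swapAB a b (Function.update x b r) := by
    funext i
    unfold swapAB
    by_cases hia : i = a
    · subst hia; rw [Function.update_self, if_pos rfl, Function.update_self]
    · rw [Function.update_of_ne hia, if_neg hia, hy]
      unfold swapAB
      rw [if_neg hia]
      by_cases hib : i = b
      · subst hib; rw [if_pos rfl, if_pos rfl, Function.update_of_ne (Ne.symm hia)]
      · rw [if_neg hib, if_neg hib, Function.update_of_ne hib]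
  have e2 : Function.update y c r = swapAB a b (Function.update x c r) := by
    funext i
    unfold swapAB
    by_cases hic : i = c
    · subst hic
      rw [Function.update_self, if_neg hc1, if_neg hc2, Function.update_self]
    · rw [Function.update_of_ne hic, hy]
      unfold swapAB
      by_cases hia : i = a
      · subst hia
        rw [if_pos rfl, if_pos rfl, Function.update_of_ne (fun hh => hc2 hh.symm)]
      · rw [if_neg hia, if_neg hia]
        by_cases hib : i = b
        · subst hib
          rw [if_pos rfl, if_pos rfl, Function.update_of_ne (fun hh => hc1 hh.symm)]
        · rw [if_neg hib, if_neg hib, Function.update_of_ne hic]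
  have hb_prof : IsProfile n j (Function.update x b r) := by
    intro i
    by_cases hi : i = b
    · subst hi; rw [Function.update_self]; omega
    · rw [Function.update_of_ne hi]; exact hx i
  have hc_prof : IsProfile n j (Function.update x c r) := by
    intro i
    by_cases hi : i = c
    · subst hi; rw [Function.update_self]; omega
    · rw [Function.update_of_ne hi]; exact hx i
  have s1 := swap_invariant n j f a b hab hba (Function.update x b r) hb_prof
  have s2 := swap_invariant n j f a b hab hba (Function.update x c r) hc_prof
  rw [e1, e2, s1, s2] at h
  exact h

/-- In a linear game ladder, if `i ~ j` and `j ≻ k`, then `i ≻ k`. -/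
theorem succ_of_sim_succ (n j : ℕ) (hn : 1 ≤ n) (hj : 2 ≤ j)
    (f : (Fin n → ℕ) → ℝ) (hmono : LadderMono n j f)
    (hcomp : ∀ p q : Fin n, GlobalGE n j f p q ∨ GlobalGE n j f q p) :
    ∀ a b c : Fin n,
      (GlobalGE n j f a b ∧ GlobalGE n j f b a) →
      (GlobalGE n j f b c ∧ ¬ GlobalGE n j f c b) →
      (GlobalGE n j f a c ∧ ¬ GlobalGE n j f c a) := by
  intro a b c ⟨hab, hba⟩ ⟨hbc, hncb⟩
  rcases eq_or_ne a b with rfl | hne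
  · exact ⟨hbc, hncb⟩
  have hcb : c ≠ b := by rintro rfl; exact hncb hbc
  have hca : c ≠ a := by rintro rfl; exact hncb hab
  constructor
  · rcases hcomp a c with h | h
    · exact h
    · exact absurd (transfer n j f a b c hab hba h hca hcb) hncb
  · intro h
    exact hncb (transfer n j f a b c hab hba h hca hcb)
end

section
/- Let (N, T, f) be a linear game ladder (i.e., the global influence relation ⪰ is complete). Then the asymmetric component ≻ of ⪰ is transitive: for all players i, j, k, if i ≻ j and j ≻ k, then i ≻ k. -/
open Function

namespace STP6

lemma globalGE_refl (n j : ℕ) (f : (Fin n → ℕ) → ℝ) (p : Fin n) : GlobalGE n j f p p :=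
  fun _ _ _ _ _ _ _ _ _ => le_refl _

lemma isProfile_update {n j : ℕ} {x : Fin n → ℕ} (hx : IsProfile n j x)
    (p : Fin n) {v : ℕ} (h1 : 1 ≤ v) (h2 : v ≤ j) :
    IsProfile n j (Function.update x p v) := by
  intro i
  by_cases h : i = p
  · subst h; simp [h1, h2]
  · simp [Function.update_apply, h]; exact hx i

/-- Swap lemma: if `p ⪰ q` and in profile `x` player `p` is at `l`, `q` at `h` with
`l ≤ h`, then swapping them (p up to h, q down to l) weakly increases output. -/
lemma swap {n j : ℕ} {f : (Fin n → ℕ) → ℝ} (hm : LadderMono n j f)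
    {p q : Fin n} (hpq : p ≠ q) (hge : GlobalGE n j f p q)
    {x : Fin n → ℕ} (hx : IsProfile n j x) {l h : ℕ}
    (hxp : x p = l) (hxq : x q = h) (hlh : l ≤ h) (hhj : h ≤ j) :
    f x ≤ f (Function.update (Function.update x p h) q l) := by
  rcases eq_or_lt_of_le hlh with heq | hlt
  · subst heq
    have h1 : Function.update x p l = x := by rw [← hxp]; exact Function.update_eq_self _ _
    rw [h1, ← hxq, Function.update_eq_self]
  · have hl1 : 1 ≤ l := hxp ▸ (hx p).1
    have key := hge l h hl1 hlt hhj (Function.update x q l)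
      (isProfile_update hx q hl1 (le_trans hlh hhj))
      (by simp [Function.update_apply, hpq, hxp])
      (by simp)
    have e1 : Function.update (Function.update x q l) q h = x := by
      rw [Function.update_idem, ← hxq, Function.update_eq_self]
    have e2 : Function.update (Function.update x q l) p h
        = Function.update (Function.update x p h) q l :=
      Function.update_comm (Ne.symm hpq) _ _ _
    rw [e1, e2] at key
    exact key

/-- The three-player profile: `a` at `u`, `b` at `v`, `c` at `w`, others as in `x`. -/
def Prof {n : ℕ} (x : Fin n → ℕ) (a b c : Fin n) (u v w : ℕ) : Fin n → ℕ :=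
  fun i => if i = a then u else if i = b then v else if i = c then w else x i

section ProfLemmas

variable {n j : ℕ} {x : Fin n → ℕ} {a b c : Fin n}

lemma Prof_a (hab : a ≠ b) (hac : a ≠ c) (u v w : ℕ) : Prof x a b c u v w a = u := by
  simp [Prof]

lemma Prof_b (hab : a ≠ b) (hbc : b ≠ c) (u v w : ℕ) : Prof x a b c u v w b = v := by
  simp [Prof, Ne.symm hab]

lemma Prof_c (hac : a ≠ c) (hbc : b ≠ c) (u v w : ℕ) : Prof x a b c u v w c = w := by
  simp [Prof, Ne.symm hac, Ne.symm hbc]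

lemma Prof_update_a (u u' v w : ℕ) :
    Function.update (Prof x a b c u v w) a u' = Prof x a b c u' v w := by
  funext i
  by_cases h : i = a <;> simp [Function.update_apply, Prof, h]

lemma Prof_update_b (hab : a ≠ b) (u v v' w : ℕ) :
    Function.update (Prof x a b c u v w) b v' = Prof x a b c u v' w := by
  funext i
  by_cases h : i = b
  · subst h; simp [Function.update_apply, Prof, Ne.symm hab]
  · simp [Function.update_apply, Prof, h]

lemma Prof_update_c (hac : a ≠ c) (hbc : b ≠ c) (u v w w' : ℕ) :
    Function.update (Prof x a b c u v w) c w' = Prof x a b c u v w' := by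
  funext i
  by_cases h : i = c
  · subst h; simp [Function.update_apply, Prof, Ne.symm hac, Ne.symm hbc]
  · simp [Function.update_apply, Prof, h]

lemma Prof_isProfile (hx : IsProfile n j x) (hab : a ≠ b) (hac : a ≠ c) (hbc : b ≠ c)
    {u v w : ℕ} (hu : 1 ≤ u ∧ u ≤ j) (hv : 1 ≤ v ∧ v ≤ j) (hw : 1 ≤ w ∧ w ≤ j) :
    IsProfile n j (Prof x a b c u v w) := by
  intro i
  simp only [Prof]
  split_ifs
  · exact hu
  · exact hv
  · exact hw
  · exact hx i

end ProfLemmas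

section Swaps

variable {n j : ℕ} {f : (Fin n → ℕ) → ℝ} {x : Fin n → ℕ} {a b c : Fin n}

/-- `a` up over `b`. -/
lemma swap_ab (hm : LadderMono n j f) (hab : a ≠ b) (hac : a ≠ c) (hbc : b ≠ c)
    (hge : GlobalGE n j f a b) (hx : IsProfile n j x)
    {l h w : ℕ} (hlh : l ≤ h) (hl : 1 ≤ l ∧ l ≤ j) (hh : 1 ≤ h ∧ h ≤ j)
    (hw : 1 ≤ w ∧ w ≤ j) :
    f (Prof x a b c l h w) ≤ f (Prof x a b c h l w) := by
  have := swap hm hab hge (Prof_isProfile hx hab hac hbc hl hh hw)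
    (Prof_a hab hac l h w) (Prof_b hab hbc l h w) hlh hh.2
  rwa [Prof_update_a, Prof_update_b hab] at this

/-- `b` up over `c`. -/
lemma swap_bc (hm : LadderMono n j f) (hab : a ≠ b) (hac : a ≠ c) (hbc : b ≠ c)
    (hge : GlobalGE n j f b c) (hx : IsProfile n j x)
    {u l h : ℕ} (hlh : l ≤ h) (hu : 1 ≤ u ∧ u ≤ j) (hl : 1 ≤ l ∧ l ≤ j)
    (hh : 1 ≤ h ∧ h ≤ j) :
    f (Prof x a b c u l h) ≤ f (Prof x a b c u h l) := by
  have := swap hm hbc hge (Prof_isProfile hx hab hac hbc hu hl hh)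
    (Prof_b hab hbc u l h) (Prof_c hac hbc u l h) hlh hh.2
  rwa [Prof_update_b hab, Prof_update_c hac hbc] at this

/-- `c` up over `a`. -/
lemma swap_ca (hm : LadderMono n j f) (hab : a ≠ b) (hac : a ≠ c) (hbc : b ≠ c)
    (hge : GlobalGE n j f c a) (hx : IsProfile n j x)
    {l v h : ℕ} (hlh : l ≤ h) (hl : 1 ≤ l ∧ l ≤ j) (hv : 1 ≤ v ∧ v ≤ j)
    (hh : 1 ≤ h ∧ h ≤ j) :
    f (Prof x a b c h v l) ≤ f (Prof x a b c l v h) := by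
  have := swap hm (Ne.symm hac) hge (Prof_isProfile hx hab hac hbc hh hv hl)
    (Prof_c hac hbc h v l) (Prof_a hab hac h v l) hlh hh.2
  rwa [Prof_update_c hac hbc, Prof_update_a] at this

end Swaps

/-- Cycle lemma: `a ⪰ b ⪰ c ⪰ a` implies `b ⪰ a`. -/
lemma cycle {n j : ℕ} {f : (Fin n → ℕ) → ℝ} (hm : LadderMono n j f)
    {a b c : Fin n} (hab : a ≠ b) (hac : a ≠ c) (hbc : b ≠ c)
    (h1 : GlobalGE n j f a b) (h2 : GlobalGE n j f b c) (h3 : GlobalGE n j f c a) :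
    GlobalGE n j f b a := by
  intro s r hs hsr hrj x hx hxb hxa
  set t := x c with ht
  have hsj : 1 ≤ s ∧ s ≤ j := ⟨hs, le_trans (le_of_lt hsr) hrj⟩
  have hrj' : 1 ≤ r ∧ r ≤ j := ⟨le_trans hs (le_of_lt hsr), hrj⟩
  have htj : 1 ≤ t ∧ t ≤ j := hx c
  have ea : Function.update x a r = Prof x a b c r s t := by
    funext i
    by_cases h : i = a
    · subst h; simp [Function.update_apply, Prof]
    · simp only [Function.update_apply, if_neg h, Prof, if_neg h]
      split_ifs with h1' h2'
      · subst h1'; exact hxb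
      · subst h2'; rfl
      · rfl
  have eb : Function.update x b r = Prof x a b c s r t := by
    funext i
    by_cases h : i = b
    · subst h; simp [Function.update_apply, Prof, Ne.symm hab]
    · simp only [Function.update_apply, if_neg h, Prof, if_neg h]
      split_ifs with h1' h2'
      · subst h1'; exact hxa
      · subst h2'; rfl
      · rfl
  rw [ea, eb]
  -- now show f (Prof x a b c r s t) ≤ f (Prof x a b c s r t)
  rcases lt_or_ge t s with hts | hst
  · -- t < s : (r,s,t) ≤ (t,s,r) ≤ (s,t,r) ≤ (s,r,t)
    calc f (Prof x a b c r s t)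
        ≤ f (Prof x a b c t s r) :=
          swap_ca hm hab hac hbc h3 hx (le_of_lt (lt_trans hts hsr)) htj hsj hrj'
      _ ≤ f (Prof x a b c s t r) :=
          swap_ab hm hab hac hbc h1 hx (le_of_lt hts) htj hsj hrj'
      _ ≤ f (Prof x a b c s r t) :=
          swap_bc hm hab hac hbc h2 hx (le_of_lt (lt_trans hts hsr)) hsj htj hrj'
  · rcases le_or_gt t r with htr | hrt
    · -- s ≤ t ≤ r : (r,s,t) ≤ (t,s,r) ≤ (t,r,s) ≤ (s,r,t)
      calc f (Prof x a b c r s t)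
          ≤ f (Prof x a b c t s r) :=
            swap_ca hm hab hac hbc h3 hx htr htj hsj hrj'
        _ ≤ f (Prof x a b c t r s) :=
            swap_bc hm hab hac hbc h2 hx (le_of_lt hsr) htj hsj hrj'
        _ ≤ f (Prof x a b c s r t) :=
            swap_ca hm hab hac hbc h3 hx hst hsj hrj' htj
    · -- r < t : (r,s,t) ≤ (r,t,s) ≤ (s,t,r) ≤ (t,s,r) ≤ (t,r,s) ≤ (s,r,t)
      have hstle : s ≤ t := hst
      calc f (Prof x a b c r s t)
          ≤ f (Prof x a b c r t s) :=
            swap_bc hm hab hac hbc h2 hx hstle hrj' hsj htj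
        _ ≤ f (Prof x a b c s t r) :=
            swap_ca hm hab hac hbc h3 hx (le_of_lt hsr) hsj htj hrj'
        _ ≤ f (Prof x a b c t s r) :=
            swap_ab hm hab hac hbc h1 hx hstle hsj htj hrj'
        _ ≤ f (Prof x a b c t r s) :=
            swap_bc hm hab hac hbc h2 hx (le_of_lt hsr) htj hsj hrj'
        _ ≤ f (Prof x a b c s r t) :=
            swap_ca hm hab hac hbc h3 hx hstle hsj hrj' htj
end STP6

/-- In a linear game ladder, the asymmetric component `≻` of `⪰`
is transitive. -/
theorem succ_transitive_of_complete (n j : ℕ) (hn : 1 ≤ n) (hj : 2 ≤ j)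
    (f : (Fin n → ℕ) → ℝ) (hmono : LadderMono n j f)
    (hcomp : ∀ p q : Fin n, GlobalGE n j f p q ∨ GlobalGE n j f q p) :
    ∀ a b c : Fin n,
      (GlobalGE n j f a b ∧ ¬ GlobalGE n j f b a) →
      (GlobalGE n j f b c ∧ ¬ GlobalGE n j f c b) →
      (GlobalGE n j f a c ∧ ¬ GlobalGE n j f c a) := by
  intro a b c ⟨hab, hnba⟩ ⟨hbc, hncb⟩
  by_cases heab : a = b
  · exact absurd (heab ▸ hab) (heab ▸ hnba)
  by_cases hebc : b = c
  · exact absurd (hebc ▸ hbc) (hebc ▸ hncb)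
  by_cases heac : a = c
  · exact absurd (heac ▸ hab) hncb
  have hnca : ¬ GlobalGE n j f c a := by
    intro hca
    exact hnba (STP6.cycle hmono heab heac hebc hab hbc hca)
  refine ⟨?_, hnca⟩
  rcases hcomp a c with h | h
  · exact h
  · exact absurd h hnca
end

section
/- Let (N, T, f) be a linear game ladder (i.e., the global influence relation ⪰ is complete). Then ⪰ is a complete preorder on N: it is reflexive, transitive, and total (for all p, q, p ⪰ q or q ⪰ p), and its asymmetric component ≻ is transitive. -/
open Function

lemma globalGE_key (n j : ℕ) (f : (Fin n → ℕ) → ℝ) {a b c : Fin n}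
    (hab' : a ≠ b) (hac' : a ≠ c) (hbc' : b ≠ c)
    (hab : GlobalGE n j f a b) (hbc : GlobalGE n j f b c)
    (hca : GlobalGE n j f c a) : GlobalGE n j f a c := by
  intro s r h1s hsr hrj x hx hxa hxc
  set t := x b with htdef
  obtain ⟨h1t, htj⟩ := hx b
  have h1r : 1 ≤ r := le_of_lt (lt_of_le_of_lt h1s hsr)
  have hsj : s ≤ j := le_of_lt (lt_of_lt_of_le hsr hrj)
  set P : ℕ → ℕ → ℕ → (Fin n → ℕ) := fun α β γ =>
    Function.update (Function.update (Function.update x a α) b β) c γ with hPdef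
  have hP_apply : ∀ α β γ i, P α β γ i =
      if i = c then γ else if i = b then β else if i = a then α else x i := by
    intro α β γ i
    simp [hPdef, Function.update_apply]
  have hPa : ∀ α β γ, P α β γ a = α := by
    intro α β γ; rw [hP_apply]; simp [hac', hab']
  have hPb : ∀ α β γ, P α β γ b = β := by
    intro α β γ; rw [hP_apply]; simp [hbc']
  have hPc : ∀ α β γ, P α β γ c = γ := by
    intro α β γ; rw [hP_apply]; simp
  have hPprof : ∀ α β γ, 1 ≤ α → α ≤ j → 1 ≤ β → β ≤ j → 1 ≤ γ → γ ≤ j →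
      IsProfile n j (P α β γ) := by
    intro α β γ h1 h2 h3 h4 h5 h6 i
    rw [hP_apply]
    split_ifs with p1 p2 p3
    · exact ⟨h5, h6⟩
    · exact ⟨h3, h4⟩
    · exact ⟨h1, h2⟩
    · exact hx i
  have hUa : ∀ α β γ v, Function.update (P α β γ) a v = P v β γ := by
    intro α β γ v; funext i
    rw [Function.update_apply, hP_apply, hP_apply]
    split_ifs with p1 p2 p3 <;> simp_all
  have hUb : ∀ α β γ v, Function.update (P α β γ) b v = P α v γ := by
    intro α β γ v; funext i
    rw [Function.update_apply, hP_apply, hP_apply]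
    split_ifs with p1 p2 p3 <;> simp_all
  have hUc : ∀ α β γ v, Function.update (P α β γ) c v = P α β v := by
    intro α β γ v; funext i
    rw [Function.update_apply, hP_apply, hP_apply]
    split_ifs with p1 p2 p3 <;> simp_all
  have hPx : P s t s = x := by
    funext i
    rw [hP_apply]
    split_ifs with p1 p2 p3 <;> simp_all
  -- the three relations in `F` form
  have Hab : ∀ s' r' γ, 1 ≤ s' → s' < r' → r' ≤ j → 1 ≤ γ → γ ≤ j →
      f (P s' r' γ) ≤ f (P r' s' γ) := by
    intro s' r' γ u1 u2 u3 u4 u5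
    have h1' : 1 ≤ r' := le_of_lt (lt_of_le_of_lt u1 u2)
    have h2' : s' ≤ j := le_of_lt (lt_of_lt_of_le u2 u3)
    have := hab s' r' u1 u2 u3 (P s' s' γ) (hPprof _ _ _ u1 h2' u1 h2' u4 u5)
      (hPa _ _ _) (hPb _ _ _)
    rwa [hUa, hUb] at this
  have Hbc : ∀ α s' r', 1 ≤ s' → s' < r' → r' ≤ j → 1 ≤ α → α ≤ j →
      f (P α s' r') ≤ f (P α r' s') := by
    intro α s' r' u1 u2 u3 u4 u5
    have h2' : s' ≤ j := le_of_lt (lt_of_lt_of_le u2 u3)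
    have := hbc s' r' u1 u2 u3 (P α s' s') (hPprof _ _ _ u4 u5 u1 h2' u1 h2')
      (hPb _ _ _) (hPc _ _ _)
    rwa [hUb, hUc] at this
  have Hca : ∀ s' β r', 1 ≤ s' → s' < r' → r' ≤ j → 1 ≤ β → β ≤ j →
      f (P r' β s') ≤ f (P s' β r') := by
    intro s' β r' u1 u2 u3 u4 u5
    have h2' : s' ≤ j := le_of_lt (lt_of_lt_of_le u2 u3)
    have := hca s' r' u1 u2 u3 (P s' β s') (hPprof _ _ _ u1 h2' u4 u5 u1 h2')
      (hPc _ _ _) (hPa _ _ _)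
    rwa [hUa, hUc] at this
  -- goal : f (update x c r) ≤ f (update x a r)
  rw [show Function.update x c r = P s t r by rw [← hPx, hUc],
      show Function.update x a r = P r t s by rw [← hPx, hUa]]
  rcases lt_trichotomy t r with htr | htr | htr
  · calc f (P s t r) ≤ f (P s r t) := Hbc s t r h1t htr hrj h1s hsj
      _ ≤ f (P r s t) := Hab s r t h1s hsr hrj h1t htj
      _ ≤ f (P t s r) := Hca t s r h1t htr hrj h1s hsj
      _ ≤ f (P t r s) := Hbc t s r h1s hsr hrj h1t htj
      _ ≤ f (P r t s) := Hab t r s h1t htr hrj h1s hsj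
  · rw [htr]
    calc f (P s r r) ≤ f (P r s r) := Hab s r r h1s hsr hrj h1r hrj
      _ ≤ f (P r r s) := Hbc r s r h1s hsr hrj h1r hrj
  · have hst : s < t := hsr.trans htr
    calc f (P s t r) ≤ f (P t s r) := Hab s t r h1s hst htj h1r hrj
      _ ≤ f (P r s t) := Hca r s t h1r htr htj h1s hsj
      _ ≤ f (P r t s) := Hbc r s t h1s hst htj h1r hrj

lemma globalGE_refl (n j : ℕ) (f : (Fin n → ℕ) → ℝ) (p : Fin n) :
    GlobalGE n j f p p := by
  intro s r _ _ _ x _ _ _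
  exact le_refl _

/-- In a linear game ladder, `⪰` is a complete preorder: reflexive,
transitive and total, and its asymmetric component `≻` is transitive. -/
theorem globalGE_complete_preorder (n j : ℕ) (hn : 1 ≤ n) (hj : 2 ≤ j)
    (f : (Fin n → ℕ) → ℝ) (hmono : LadderMono n j f)
    (hcomp : ∀ p q : Fin n, GlobalGE n j f p q ∨ GlobalGE n j f q p) :
    (∀ p : Fin n, GlobalGE n j f p p) ∧
    (∀ a b c : Fin n, GlobalGE n j f a b → GlobalGE n j f b c → GlobalGE n j f a c) ∧
    (∀ p q : Fin n, GlobalGE n j f p q ∨ GlobalGE n j f q p) ∧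
    (∀ a b c : Fin n,
      (GlobalGE n j f a b ∧ ¬ GlobalGE n j f b a) →
      (GlobalGE n j f b c ∧ ¬ GlobalGE n j f c b) →
      (GlobalGE n j f a c ∧ ¬ GlobalGE n j f c a)) := by
  have htrans : ∀ a b c : Fin n,
      GlobalGE n j f a b → GlobalGE n j f b c → GlobalGE n j f a c := by
    intro a b c hab hbc
    by_cases hac' : a = c
    · exact hac' ▸ globalGE_refl n j f a
    by_cases hab' : a = b
    · exact hab' ▸ hbc
    by_cases hbc' : b = c
    · exact hbc' ▸ hab
    rcases hcomp a c with h | h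
    · exact h
    · exact globalGE_key n j f hab' hac' hbc' hab hbc h
  refine ⟨globalGE_refl n j f, htrans, hcomp, ?_⟩
  intro a b c ⟨hab, hnba⟩ ⟨hbc, hncb⟩
  refine ⟨htrans a b c hab hbc, fun hca => ?_⟩
  exact hncb (htrans c a b hca hab)
end
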